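/- Let m > g(g-1) be an odd number not divisible by g-1. If some c with g+1 ≤ c ≤ g(g-1) is congruent mod m to an element of the subgroup of (Z/mZ)^× generated by g, then m is complete. -/

import Mathlib

/-!
Let `M` be the largest point of a non-trivial cycle. Then `0 < (g - 1) M < m` (strictly, as
`g - 1 ∤ m`), the digit at `M` is `0`, and its successor is `Y = M / g`. Modulo `m` every step
of the cycle multiplies by `g⁻¹`, so going back `j` steps from `Y` gives a cycle point
`z ≡ g ^ j Y ≡ c Y`.
But `0 ≤ z ≤ M = g Y < c Y ≤ g (g - 1) Y = (g - 1) M < m`, so `0 < c Y - z < m`, a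
contradiction.
-/

/-- A cycle for the digit set `{0, m}` with scale `g`: integers `x i`, digits `l i ∈ {0, m}`,
satisfying `x (i+1) = (x i + l i) / g` cyclically. -/
def IsCycle (g m : ℕ) (r : ℕ) (x l : ZMod r → ℤ) : Prop :=
  0 < r ∧ (∀ i, l i = 0 ∨ l i = (m : ℤ)) ∧ (∀ i, (g : ℤ) * x (i + 1) = x i + l i)

/-- A non-trivial extreme cycle: a cycle whose digits are not all zero. -/
def IsNontrivialCycle (g m : ℕ) (r : ℕ) (x l : ZMod r → ℤ) : Prop :=
  IsCycle g m r x l ∧ ∃ i, l i ≠ 0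

/-- `m` is incomplete if there exists a non-trivial extreme cycle for `{0, m}`. -/
def Incomplete (g m : ℕ) : Prop :=
  ∃ (r : ℕ) (x l : ZMod r → ℤ), IsNontrivialCycle g m r x l

/-- `m` is complete if the only extreme cycle for `{0, m}` is the trivial one. -/
def Complete (g m : ℕ) : Prop := ¬ Incomplete g m

/-- `m` is primitive if it is incomplete and all proper divisors of `m` are complete. -/
def Primitive (g m : ℕ) : Prop :=
  Incomplete g m ∧ ∀ d : ℕ, d ∣ m → d ≠ m → Complete g d

namespace IsCycle

variable {g m r : ℕ} {x l : ZMod r → ℤ}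

theorem mul_eq_pred (hc : IsCycle g m r x l) (i : ZMod r) :
    (g : ℤ) * x i = x (i - 1) + l (i - 1) := by
  simpa using hc.2.2 (i - 1)

theorem digit_nonneg (hc : IsCycle g m r x l) (i : ZMod r) : 0 ≤ l i := by
  rcases hc.2.1 i with h | h <;> simp [h]

theorem intCast_digit_eq_zero (hc : IsCycle g m r x l) (i : ZMod r) :
    ((l i : ℤ) : ZMod m) = 0 := by
  rcases hc.2.1 i with h | h <;> simp [h]

theorem nonneg (hc : IsCycle g m r x l) (hg : 1 < g) (i : ZMod r) : 0 ≤ x i := by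
  have : NeZero r := ⟨hc.1.ne'⟩
  obtain ⟨i₁, hmin⟩ := Finite.exists_min x
  have h := hc.mul_eq_pred i₁
  have hgZ : (1 : ℤ) < g := by exact_mod_cast hg
  have : 0 ≤ x i₁ := by nlinarith [hmin (i₁ - 1), hc.digit_nonneg (i₁ - 1)]
  exact this.trans (hmin i)

section Max

variable {i₀ : ZMod r}

theorem sub_one_mul_max_le (hc : IsCycle g m r x l) (hmax : ∀ i, x i ≤ x i₀) :
    ((g : ℤ) - 1) * x i₀ ≤ m := by
  have h := hc.mul_eq_pred i₀
  rcases hc.2.1 (i₀ - 1) with h0 | h0 <;> rw [h0] at h <;> linarith [hmax (i₀ - 1)]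

theorem sub_one_mul_max_lt (hc : IsCycle g m r x l) (hmax : ∀ i, x i ≤ x i₀)
    (hg : 1 ≤ g) (hnd : ¬ (g - 1) ∣ m) : ((g : ℤ) - 1) * x i₀ < m := by
  refine (hc.sub_one_mul_max_le hmax).lt_of_ne fun heq => hnd ?_
  have : ((g - 1 : ℕ) : ℤ) ∣ m := ⟨x i₀, by rw [← heq, Nat.cast_sub hg, Nat.cast_one]⟩
  exact_mod_cast this

theorem max_pos (hc : IsCycle g m r x l) (hg : 1 < g) (hmax : ∀ i, x i ≤ x i₀)
    {i : ZMod r} (hi : l i ≠ 0) : 0 < x i₀ := by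
  by_contra! hneg
  have hzero : ∀ j, x j = 0 := fun j => le_antisymm ((hmax j).trans hneg) (hc.nonneg hg j)
  have h := hc.2.2 i
  rw [hzero, hzero] at h
  exact hi (by linarith)

/-- Since `(g - 1) M < m`, the digit `m` would push the successor of `M` beyond `M`. -/
theorem digit_max_eq_zero (hc : IsCycle g m r x l) (hmax : ∀ i, x i ≤ x i₀)
    (hlt : ((g : ℤ) - 1) * x i₀ < m) : l i₀ = 0 := by
  refine (hc.2.1 i₀).resolve_right fun hm => ?_
  have h := hc.2.2 i₀
  rw [hm] at h
  nlinarith [mul_le_mul_of_nonneg_left (hmax (i₀ + 1)) (Int.natCast_nonneg g)]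

end Max

theorem natCast_pow_mul_eq (hc : IsCycle g m r x l) (n : ℕ) (i : ZMod r) :
    (g : ZMod m) ^ n * ((x (i + n) : ℤ) : ZMod m) = ((x i : ℤ) : ZMod m) := by
  induction n generalizing i with
  | zero => simp
  | succ n ih =>
    have hstep :
        (g : ZMod m) * ((x (i + n + 1) : ℤ) : ZMod m) = ((x (i + n) : ℤ) : ZMod m) := by
      simpa [hc.intCast_digit_eq_zero] using congrArg (fun t : ℤ => (t : ZMod m)) (hc.2.2 (i + n))
    rw [Nat.cast_succ, ← add_assoc, pow_succ, mul_assoc, hstep, ih]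

theorem le_sub_one_mul_max_of_pow_eq (hc : IsCycle g m r x l) (hg : 1 < g) {i₀ : ZMod r}
    (hmax : ∀ i, x i ≤ x i₀) (hpos : 0 < x i₀) (hl₀ : l i₀ = 0) {c j : ℕ}
    (hgc : g + 1 ≤ c) (hcg : c ≤ g * (g - 1)) (hj : (g : ZMod m) ^ j = c) :
    (m : ℤ) ≤ ((g : ℤ) - 1) * x i₀ := by
  set Y := x (i₀ + 1)
  set z := x (i₀ + 1 - j)
  have hY : (g : ℤ) * Y = x i₀ := by simpa [hl₀] using hc.2.2 i₀
  have hcong : ((c * Y : ℤ) : ZMod m) = ((z : ℤ) : ZMod m) := by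
    simpa [hj] using hc.natCast_pow_mul_eq j (i₀ + 1 - j)
  have hdvd : (m : ℤ) ∣ c * Y - z :=
    ((ZMod.intCast_eq_intCast_iff _ _ _).mp hcong).symm.dvd
  have hgc' : (g : ℤ) + 1 ≤ c := by exact_mod_cast hgc
  have hcg' : (c : ℤ) ≤ g * ((g : ℤ) - 1) := by
    rw [← Nat.cast_one, ← Nat.cast_sub hg.le, ← Nat.cast_mul]; exact_mod_cast hcg
  have hYpos : 0 < Y := by nlinarith
  have hlow : 0 < c * Y - z := by
    nlinarith [hmax (i₀ + 1 - j), mul_le_mul_of_nonneg_right hgc' hYpos.le]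
  have hhigh : c * Y - z ≤ ((g : ℤ) - 1) * x i₀ := by
    nlinarith [hc.nonneg hg (i₀ + 1 - j), mul_le_mul_of_nonneg_right hcg' hYpos.le]
  exact (Int.le_of_dvd hlow hdvd).trans hhigh

end IsCycle

theorem stmt9_general (g m : ℕ) (hg4 : 4 ≤ g)
    (hnd : ¬ (g - 1) ∣ m)
    (h : ∃ c : ℕ, g + 1 ≤ c ∧ c ≤ g * (g - 1) ∧
      ∃ j : ℕ, ((g : ZMod m)) ^ j = (c : ZMod m)) :
    Complete g m := by
  rintro ⟨r, x, l, hc, i, hi⟩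
  obtain ⟨c, hgc, hcg, j, hj⟩ := h
  have : NeZero r := ⟨hc.1.ne'⟩
  obtain ⟨i₀, hmax⟩ := Finite.exists_max x
  have hg : 1 < g := by omega
  have hlt := hc.sub_one_mul_max_lt hmax hg.le hnd
  have hle := hc.le_sub_one_mul_max_of_pow_eq hg hmax (hc.max_pos hg hmax hi)
    (hc.digit_max_eq_zero hmax hlt) hgc hcg hj
  exact hlt.not_ge hle

theorem stmt9 (g m : ℕ) (hg4 : 4 ≤ g) (hge : Even g) (hm : Odd m)
    (hmg : g * (g - 1) < m) (hnd : ¬ (g - 1) ∣ m)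
    (h : ∃ c : ℕ, g + 1 ≤ c ∧ c ≤ g * (g - 1) ∧
      ∃ j : ℕ, ((g : ZMod m)) ^ j = (c : ZMod m)) :
    Complete g m :=
  stmt9_general g m hg4 hnd h
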